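/- Let k > 0, h > 0 with 2k²h < 1, ω(x) = (1/(2k))e^{−k|x|}, a = −ln(1−2k²h)/(2k), and u(x) = ∫_{−a}^a ω(x−y) dy. Then u(x) > h for |x| < a and u(x) < h for |x| > a, i.e., u is an (h; −a, a)-bump. -/

import Mathlib

/-!
The convolution is the integral of the kernel over `[x - a, x + a]`, which is elementary:
`u x = (1 - exp (-k a) cosh (k x)) / k²` for `|x| ≤ a` and `u x = exp (-k |x|) sinh (k a) / k²`
for `|x| ≥ a`. The choice of `a` says exactly that `h = u a`, and then
`u x - h = exp (-k a) (cosh (k a) - cosh (k x)) / k²` inside and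
`u x - h = sinh (k a) (exp (-k |x|) - exp (-k a)) / k²` outside.
-/

open intervalIntegral Real Set

noncomputable section

def laplaceKernel (k x : ℝ) : ℝ := (1 / (2 * k)) * exp (-k * |x|)

def laplaceBump (k a x : ℝ) : ℝ := ∫ y in (-a)..a, laplaceKernel k (x - y)

variable {k : ℝ}

lemma laplaceKernel_neg (x : ℝ) : laplaceKernel k (-x) = laplaceKernel k x := by
  simp only [laplaceKernel, abs_neg]

lemma continuous_laplaceKernel : Continuous (laplaceKernel k) := by
  unfold laplaceKernel; fun_prop

lemma integral_laplaceKernel_of_nonneg (hk : k ≠ 0) {s t : ℝ} (hs : 0 ≤ s) (ht : 0 ≤ t) :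
    ∫ τ in s..t, laplaceKernel k τ = (exp (-k * s) - exp (-k * t)) / (2 * k ^ 2) := by
  have hK : EqOn (laplaceKernel k) (fun τ ↦ (1 / (2 * k)) * exp (-k * τ)) (uIcc s t) := by
    intro τ hτ
    have : 0 ≤ τ := le_trans (le_min hs ht) hτ.1
    simp only [laplaceKernel, abs_of_nonneg this]
  have hF : ∀ τ : ℝ, HasDerivAt (fun τ ↦ -exp (-k * τ) / (2 * k ^ 2))
      ((1 / (2 * k)) * exp (-k * τ)) τ := by
    intro τ
    have hlin : HasDerivAt (fun τ ↦ -k * τ) (-k) τ := by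
      simpa using (hasDerivAt_id τ).const_mul (-k)
    refine (hlin.exp.fun_neg.div_const (2 * k ^ 2)).congr_deriv ?_
    field_simp
  rw [integral_congr hK, integral_eq_sub_of_hasDerivAt (fun τ _ ↦ hF τ)
    ((continuous_const.mul (continuous_const.mul continuous_id).rexp).intervalIntegrable _ _)]
  ring

lemma laplaceBump_eq_integral (a x : ℝ) :
    laplaceBump k a x = ∫ t in (x - a)..(x + a), laplaceKernel k t := by
  rw [laplaceBump, integral_comp_sub_left (laplaceKernel k) x, sub_neg_eq_add]

lemma laplaceBump_neg (a x : ℝ) : laplaceBump k a (-x) = laplaceBump k a x := by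
  have h := integral_comp_neg (a := x - a) (b := x + a) (laplaceKernel k)
  simp only [laplaceKernel_neg] at h
  rw [laplaceBump_eq_integral, laplaceBump_eq_integral, h]
  ring_nf

lemma laplaceBump_of_abs_le (hk : k ≠ 0) {a x : ℝ} (hx : |x| ≤ a) :
    laplaceBump k a x = (1 - exp (-k * a) * cosh (k * x)) / k ^ 2 := by
  obtain ⟨hxa, hax⟩ := abs_le.mp hx
  have hleft : ∫ t in (x - a)..0, laplaceKernel k t =
      ∫ t in (0 : ℝ)..(a - x), laplaceKernel k t := by
    have h := integral_comp_neg (a := 0) (b := a - x) (laplaceKernel k)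
    simp only [laplaceKernel_neg] at h
    rw [h]
    ring_nf
  have hint : ∀ s t : ℝ, IntervalIntegrable (laplaceKernel k) MeasureTheory.volume s t :=
    fun s t ↦ continuous_laplaceKernel.intervalIntegrable s t
  have hexp₁ : exp (-k * (a - x)) = exp (-k * a) * exp (k * x) := by
    rw [← exp_add]; ring_nf
  have hexp₂ : exp (-k * (x + a)) = exp (-k * a) * exp (-(k * x)) := by
    rw [← exp_add]; ring_nf
  rw [laplaceBump_eq_integral, ← integral_add_adjacent_intervals (hint _ 0) (hint 0 _), hleft,
    integral_laplaceKernel_of_nonneg hk le_rfl (by linarith),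
    integral_laplaceKernel_of_nonneg hk le_rfl (by linarith), hexp₁, hexp₂, cosh_eq, mul_zero,
    exp_zero]
  field_simp
  ring

lemma laplaceBump_of_le (hk : k ≠ 0) {a x : ℝ} (ha : 0 ≤ a) (hx : a ≤ x) :
    laplaceBump k a x = exp (-k * x) * sinh (k * a) / k ^ 2 := by
  have hexp₁ : exp (-k * (x - a)) = exp (-k * x) * exp (k * a) := by
    rw [← exp_add]; ring_nf
  have hexp₂ : exp (-k * (x + a)) = exp (-k * x) * exp (-(k * a)) := by
    rw [← exp_add]; ring_nf
  rw [laplaceBump_eq_integral, integral_laplaceKernel_of_nonneg hk (by linarith) (by linarith),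
    hexp₁, hexp₂, sinh_eq]
  field_simp

lemma laplaceBump_of_le_abs (hk : k ≠ 0) {a x : ℝ} (ha : 0 ≤ a) (hx : a ≤ |x|) :
    laplaceBump k a x = exp (-k * |x|) * sinh (k * a) / k ^ 2 := by
  rcases le_total 0 x with hx₀ | hx₀
  · rw [abs_of_nonneg hx₀] at hx ⊢
    exact laplaceBump_of_le hk ha hx
  · rw [abs_of_nonpos hx₀] at hx ⊢
    rw [← laplaceBump_neg, laplaceBump_of_le hk ha hx]

lemma laplaceBump_self (hk : k ≠ 0) {a : ℝ} (ha : 0 ≤ a) :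
    laplaceBump k a a = (1 - exp (-(2 * k * a))) / (2 * k ^ 2) := by
  have hexp : exp (-(2 * k * a)) = exp (-k * a) * exp (-(k * a)) := by
    rw [← exp_add]; ring_nf
  rw [laplaceBump_of_le hk ha le_rfl, sinh_eq, hexp]
  field_simp
  rw [mul_sub, ← exp_add, neg_add_cancel, exp_zero, sq]

lemma laplaceBump_self_lt (hk : 0 < k) {a x : ℝ} (hx : |x| < a) :
    laplaceBump k a a < laplaceBump k a x := by
  have ha : 0 ≤ a := (abs_nonneg x).trans hx.le
  rw [laplaceBump_of_le hk.ne' ha le_rfl, laplaceBump_of_abs_le hk.ne' hx.le]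
  have hcosh : cosh (k * x) < cosh (k * a) := by
    rw [cosh_lt_cosh, abs_mul, abs_mul, abs_of_pos hk, abs_of_nonneg ha]
    exact mul_lt_mul_of_pos_left hx hk
  have hone : exp (-k * a) * (cosh (k * a) + sinh (k * a)) = 1 := by
    rw [cosh_add_sinh, ← exp_add]; ring_nf; exact exp_zero
  gcongr
  nlinarith [exp_pos (-k * a)]

lemma laplaceBump_lt_self (hk : 0 < k) {a x : ℝ} (ha : 0 < a) (hx : a < |x|) :
    laplaceBump k a x < laplaceBump k a a := by
  rw [laplaceBump_of_le hk.ne' ha.le le_rfl, laplaceBump_of_le_abs hk.ne' ha.le hx.le]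
  have hsinh : 0 < sinh (k * a) := sinh_pos_iff.mpr (mul_pos hk ha)
  have hexp : exp (-k * |x|) < exp (-k * a) := exp_lt_exp.mpr (by nlinarith)
  gcongr

end

theorem stmt_13 (k h : ℝ) (hk : 0 < k) (hh : 0 < h) (hkh : 2 * k ^ 2 * h < 1)
    (ω u : ℝ → ℝ)
    (hω : ∀ x, ω x = (1 / (2 * k)) * Real.exp (-k * |x|))
    (a : ℝ) (ha : a = -Real.log (1 - 2 * k ^ 2 * h) / (2 * k))
    (hu : ∀ x, u x = ∫ y in (-a)..a, ω (x - y)) :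
    (∀ x : ℝ, |x| < a → h < u x) ∧ (∀ x : ℝ, a < |x| → u x < h) := by
  have hlog : log (1 - 2 * k ^ 2 * h) < 0 :=
    log_neg (by linarith) (by nlinarith [mul_pos (pow_pos hk 2) hh])
  have ha₀ : 0 < a := by
    rw [ha]; exact div_pos (neg_pos.mpr hlog) (by positivity)
  have hedge : laplaceBump k a a = h := by
    have hexp : exp (-(2 * k * a)) = 1 - 2 * k ^ 2 * h := by
      rw [ha, mul_div_cancel₀ _ (by positivity : (2 * k) ≠ 0), neg_neg, exp_log (by linarith)]
    rw [laplaceBump_self hk.ne' ha₀.le, hexp]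
    field_simp
    ring
  have hu' : u = laplaceBump k a := funext fun x ↦ by
    simp only [hu, hω, laplaceBump, laplaceKernel]
  rw [hu', ← hedge]
  exact ⟨fun x hx ↦ laplaceBump_self_lt hk hx, fun x hx ↦ laplaceBump_lt_self hk ha₀ hx⟩
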